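/- Let k ≥ 2, let m : {1,…,k} → ℕ with each m(l) ≥ 1, and let B_l ∈ ℂ^{m(l)×m(l)} for l = 1,…,k. For λ ∈ ℂ and each l write ρ_l(λ) for the smallest singular value of λI − B_l. Suppose φ : [0,1] → ℂ is continuous with φ(0) an eigenvalue of B_{l₀} and φ(1) an eigenvalue of B_{l₁}, where l₀ ≠ l₁. Then there exist t ∈ [0,1] and indices p ≠ q such that ρ_p(φ(t)) = ρ_q(φ(t)) and ρ_p(φ(t)) ≤ ρ_r(φ(t)) for every r ∈ {1,…,k}; that is, along any continuous path joining eigenvalues belonging to different diagonal blocks, the minimum over the blocks of the smallest singular value is attained simultaneously by two different blocks at some point of the path. -/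

import Mathlib

/-!
The smallest singular value `sMin B λ` is the minimum of `‖(λI - B)x‖` over unit vectors `x`.
Moving `λ` to `λ'` changes each `‖(λI - B)x‖` by at most `|λ - λ'|`, so `sMin B` is 1-Lipschitz;
it is nonnegative and vanishes on the spectrum of `B`. Hence along the path, block `l₀` attains
the minimum over the blocks at `t = 0` and block `l₁` at `t = 1`, and the intermediate value
theorem applied to `ρ_{l₀} - min_{r ≠ l₀} ρ_r` produces a point where two blocks tie for it.
-/

open Matrix

/-- The smallest singular value of `λI - B`: the square root of the smallest
eigenvalue of the Hermitian matrix `(λI - B)ᴴ (λI - B)`. -/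
noncomputable def sMin {m : ℕ} (B : Matrix (Fin m) (Fin m) ℂ) (lam : ℂ) : ℝ :=
  Real.sqrt (⨅ i, (Matrix.isHermitian_conjTranspose_mul_self
    (lam • (1 : Matrix (Fin m) (Fin m) ℂ) - B)).eigenvalues i)

open scoped InnerProductSpace

theorem IsPreconnected.exists_two_minimizers {ι α β : Type*} [Fintype ι]
    [TopologicalSpace α] [LinearOrder β] [TopologicalSpace β] [OrderClosedTopology β]
    {s : Set α} (hs : IsPreconnected s) {f : ι → α → β} (hf : ∀ i, ContinuousOn (f i) s)
    {a b : α} (ha : a ∈ s) (hb : b ∈ s) {i j : ι} (hij : i ≠ j)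
    (hia : ∀ r, f i a ≤ f r a) (hjb : ∀ r, f j b ≤ f r b) :
    ∃ t ∈ s, ∃ p q, p ≠ q ∧ f p t = f q t ∧ ∀ r, f p t ≤ f r t := by
  classical
  have hj : j ∈ Finset.univ.erase i := Finset.mem_erase.mpr ⟨hij.symm, Finset.mem_univ j⟩
  set g : α → β := fun t => (Finset.univ.erase i).inf' ⟨j, hj⟩ fun r => f r t
  have hg : ContinuousOn g s := ContinuousOn.finset_inf'_apply _ fun r _ => hf r
  obtain ⟨t, ht, hfg⟩ := hs.intermediate_value₂ ha hb (hf i) hg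
    (Finset.le_inf' _ _ fun r _ => hia r) ((Finset.inf'_le _ hj).trans (hjb i))
  obtain ⟨q, hq, hgq⟩ := Finset.exists_mem_eq_inf' ⟨j, hj⟩ fun r => f r t
  refine ⟨t, ht, i, q, (Finset.ne_of_mem_erase hq).symm, hfg.trans hgq, fun r => ?_⟩
  rcases eq_or_ne r i with rfl | hr
  · exact le_rfl
  · exact hfg.trans_le (Finset.inf'_le _ (Finset.mem_erase.mpr ⟨hr, Finset.mem_univ r⟩))

namespace Matrix

variable {𝕜 : Type*} [RCLike 𝕜] {n : Type*} [Fintype n] [DecidableEq n]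

theorem toEuclideanLin_smul_one_sub_apply (B : Matrix n n 𝕜) (c : 𝕜) (x : EuclideanSpace 𝕜 n) :
    toEuclideanLin (c • 1 - B) x = c • x - toEuclideanLin B x := by
  rw [map_sub, map_smul, toLpLin_one]
  rfl

theorem sq_norm_toEuclideanLin_eq_re_inner (M : Matrix n n 𝕜) (x : EuclideanSpace 𝕜 n) :
    ‖toEuclideanLin M x‖ ^ 2 = RCLike.re ⟪x, toEuclideanLin (Mᴴ * M) x⟫_𝕜 := by
  rw [toLpLin_mul_same, toEuclideanLin_conjTranspose_eq_adjoint, LinearMap.comp_apply,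
    LinearMap.adjoint_inner_right, inner_self_eq_norm_sq]

namespace IsHermitian

variable {A : Matrix n n 𝕜} (hA : A.IsHermitian)
include hA

theorem inner_eigenvectorBasis_toEuclideanLin (i : n) (x : EuclideanSpace 𝕜 n) :
    ⟪hA.eigenvectorBasis i, toEuclideanLin A x⟫_𝕜 =
      hA.eigenvalues i * ⟪hA.eigenvectorBasis i, x⟫_𝕜 := by
  have hsymm : (toEuclideanLin A).IsSymmetric := isSymmetric_toEuclideanLin_iff.mpr hA
  have heig : toEuclideanLin A (hA.eigenvectorBasis i) =
      (hA.eigenvalues i : 𝕜) • hA.eigenvectorBasis i := by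
    rw [toLpLin_apply, hA.mulVec_eigenvectorBasis, RCLike.real_smul_eq_coe_smul (K := 𝕜),
      WithLp.toLp_smul, WithLp.toLp_ofLp]
  rw [← hsymm, heig, inner_smul_left, RCLike.conj_ofReal]

theorem re_inner_toEuclideanLin_eq_sum (x : EuclideanSpace 𝕜 n) :
    RCLike.re ⟪x, toEuclideanLin A x⟫_𝕜 =
      ∑ i, hA.eigenvalues i * ‖⟪hA.eigenvectorBasis i, x⟫_𝕜‖ ^ 2 := by
  rw [← hA.eigenvectorBasis.sum_inner_mul_inner, map_sum]
  refine Finset.sum_congr rfl fun i _ => ?_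
  rw [hA.inner_eigenvectorBasis_toEuclideanLin, mul_left_comm, ← inner_conj_symm x,
    RCLike.conj_mul, ← RCLike.ofReal_pow, ← RCLike.ofReal_mul, RCLike.ofReal_re]

theorem iInf_eigenvalues_mul_sq_norm_le (x : EuclideanSpace 𝕜 n) :
    (⨅ i, hA.eigenvalues i) * ‖x‖ ^ 2 ≤ RCLike.re ⟪x, toEuclideanLin A x⟫_𝕜 := by
  rw [hA.re_inner_toEuclideanLin_eq_sum, ← hA.eigenvectorBasis.sum_sq_norm_inner_right,
    Finset.mul_sum]
  exact Finset.sum_le_sum fun i _ => mul_le_mul_of_nonneg_right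
    (ciInf_le (Set.finite_range _).bddBelow i) (sq_nonneg _)

theorem re_inner_toEuclideanLin_eigenvectorBasis (i : n) :
    RCLike.re ⟪hA.eigenvectorBasis i, toEuclideanLin A (hA.eigenvectorBasis i)⟫_𝕜 =
      hA.eigenvalues i := by
  rw [hA.inner_eigenvectorBasis_toEuclideanLin, inner_self_eq_norm_sq_to_K,
    hA.eigenvectorBasis.orthonormal.1 i]
  simp

end IsHermitian

end Matrix

section sMin

variable {m : ℕ}

theorem sMin_nonneg (B : Matrix (Fin m) (Fin m) ℂ) (lam : ℂ) : 0 ≤ sMin B lam :=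
  Real.sqrt_nonneg _

theorem sMin_mul_norm_le (B : Matrix (Fin m) (Fin m) ℂ) (lam : ℂ)
    (x : EuclideanSpace ℂ (Fin m)) :
    sMin B lam * ‖x‖ ≤ ‖toEuclideanLin (lam • 1 - B) x‖ := by
  have h := (isHermitian_conjTranspose_mul_self (lam • 1 - B)).iInf_eigenvalues_mul_sq_norm_le x
  rw [← sq_norm_toEuclideanLin_eq_re_inner] at h
  calc sMin B lam * ‖x‖ = √((⨅ i, (isHermitian_conjTranspose_mul_self
          (lam • (1 : Matrix (Fin m) (Fin m) ℂ) - B)).eigenvalues i) * ‖x‖ ^ 2) := by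
        rw [Real.sqrt_mul' _ (sq_nonneg _), Real.sqrt_sq (norm_nonneg _), sMin]
    _ ≤ √(‖toEuclideanLin (lam • 1 - B) x‖ ^ 2) := Real.sqrt_le_sqrt h
    _ = ‖toEuclideanLin (lam • 1 - B) x‖ := Real.sqrt_sq (norm_nonneg _)

theorem exists_norm_eq_one_and_norm_eq_sMin [NeZero m] (B : Matrix (Fin m) (Fin m) ℂ) (lam : ℂ) :
    ∃ x : EuclideanSpace ℂ (Fin m), ‖x‖ = 1 ∧ ‖toEuclideanLin (lam • 1 - B) x‖ = sMin B lam := by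
  set hA := isHermitian_conjTranspose_mul_self (lam • (1 : Matrix (Fin m) (Fin m) ℂ) - B)
  obtain ⟨i, hi⟩ := Finite.exists_min hA.eigenvalues
  refine ⟨hA.eigenvectorBasis i, hA.eigenvectorBasis.orthonormal.1 i, ?_⟩
  rw [← Real.sqrt_sq (norm_nonneg _), sq_norm_toEuclideanLin_eq_re_inner,
    hA.re_inner_toEuclideanLin_eigenvectorBasis, sMin,
    (IsLeast.isGLB ⟨Set.mem_range_self i, Set.forall_mem_range.mpr hi⟩).ciInf_eq]

theorem sMin_eq_zero_of_mem_spectrum {B : Matrix (Fin m) (Fin m) ℂ} {lam : ℂ}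
    (h : lam ∈ spectrum ℂ B) : sMin B lam = 0 := by
  rw [← spectrum_toLpLin 2, ← Module.End.hasEigenvalue_iff_mem_spectrum] at h
  obtain ⟨v, hv⟩ := h.exists_hasEigenvector
  have hle := sMin_mul_norm_le B lam v
  rw [toEuclideanLin_smul_one_sub_apply, hv.apply_eq_smul, sub_self, norm_zero] at hle
  exact le_antisymm (nonpos_of_mul_nonpos_left hle (norm_pos_iff.mpr hv.2)) (sMin_nonneg B lam)

theorem lipschitzWith_sMin (B : Matrix (Fin m) (Fin m) ℂ) : LipschitzWith 1 (sMin B) := by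
  rcases m.eq_zero_or_pos with rfl | hm
  · -- an empty infimum in `ℝ` is `0`
    have hzero : sMin B = fun _ => 0 := funext fun lam => by simp [sMin]
    exact hzero ▸ LipschitzWith.const' 0
  have : NeZero m := ⟨hm.ne'⟩
  refine LipschitzWith.of_le_add fun lam lam' => ?_
  obtain ⟨x, hx1, hx⟩ := exists_norm_eq_one_and_norm_eq_sMin B lam'
  have hshift : toEuclideanLin (lam • 1 - B) x =
      toEuclideanLin (lam' • 1 - B) x + (lam - lam') • x := by
    rw [toEuclideanLin_smul_one_sub_apply, toEuclideanLin_smul_one_sub_apply, sub_smul]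
    abel
  calc sMin B lam = sMin B lam * ‖x‖ := by rw [hx1, mul_one]
    _ ≤ ‖toEuclideanLin (lam • 1 - B) x‖ := sMin_mul_norm_le B lam x
    _ ≤ ‖toEuclideanLin (lam' • 1 - B) x‖ + ‖(lam - lam') • x‖ := hshift ▸ norm_add_le _ _
    _ = sMin B lam' + dist lam lam' := by rw [hx, norm_smul, hx1, mul_one, dist_eq_norm]

end sMin

theorem path_between_blocks_meets_fault_set_general
    {k : ℕ} (m : Fin k → ℕ)
    (B : ∀ l : Fin k, Matrix (Fin (m l)) (Fin (m l)) ℂ)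
    (φ : ℝ → ℂ) (hφ : ContinuousOn φ (Set.Icc 0 1))
    (l₀ l₁ : Fin k) (hl : l₀ ≠ l₁)
    (h0 : φ 0 ∈ spectrum ℂ (B l₀)) (h1 : φ 1 ∈ spectrum ℂ (B l₁)) :
    ∃ t ∈ Set.Icc (0 : ℝ) 1, ∃ p q : Fin k, p ≠ q ∧
      sMin (B p) (φ t) = sMin (B q) (φ t) ∧
      ∀ r : Fin k, sMin (B p) (φ t) ≤ sMin (B r) (φ t) :=
  isPreconnected_Icc.exists_two_minimizers
    (fun l => (lipschitzWith_sMin (B l)).continuous.comp_continuousOn hφ)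
    (Set.left_mem_Icc.mpr zero_le_one) (Set.right_mem_Icc.mpr zero_le_one) hl
    (fun _ => (sMin_eq_zero_of_mem_spectrum h0).trans_le (sMin_nonneg _ _))
    (fun _ => (sMin_eq_zero_of_mem_spectrum h1).trans_le (sMin_nonneg _ _))

/-- Along any continuous path joining an eigenvalue of one diagonal block to an
eigenvalue of a different diagonal block, at some point of the path the minimum over
the blocks of the smallest singular value `ρ_l(λ)` of `λI - B_l` is attained
simultaneously by two different blocks. -/
theorem path_between_blocks_meets_fault_set
    {k : ℕ} (hk : 2 ≤ k) (m : Fin k → ℕ) (hm : ∀ l, 1 ≤ m l)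
    (B : ∀ l : Fin k, Matrix (Fin (m l)) (Fin (m l)) ℂ)
    (φ : ℝ → ℂ) (hφ : ContinuousOn φ (Set.Icc 0 1))
    (l₀ l₁ : Fin k) (hl : l₀ ≠ l₁)
    (h0 : φ 0 ∈ spectrum ℂ (B l₀)) (h1 : φ 1 ∈ spectrum ℂ (B l₁)) :
    ∃ t ∈ Set.Icc (0 : ℝ) 1, ∃ p q : Fin k, p ≠ q ∧
      sMin (B p) (φ t) = sMin (B q) (φ t) ∧
      ∀ r : Fin k, sMin (B p) (φ t) ≤ sMin (B r) (φ t) :=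
  path_between_blocks_meets_fault_set_general m B φ hφ l₀ l₁ hl h0 h1
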